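/- Double negation in Dynamic Here-and-There collapses to LDL satisfaction on the 'there' trace: for any HT-trace ⟨H,T⟩ of length λ, any dynamic formula φ, and any time point k < λ, ⟨H,T⟩,k ⊨ ¬¬φ holds in DHT if and only if T,k ⊨ φ holds in LDL. -/
import Mathlib


namespace LDL

mutual
inductive Formula (α : Type) : Type where
  | atom : α → Formula α
  | bot : Formula α
  | top : Formula α
  | dia : Path α → Formula α → Formula α
  | box : Path α → Formula α → Formula α

inductive Path (α : Type) : Type where
  | tau : Path α
  | test : Formula α → Path α
  | plus : Path α → Path α → Path α
  | seq : Path α → Path α → Path α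
  | star : Path α → Path α
end

/-- n-fold iteration of a relation, with the 0-fold case restricted to points `< lam`. -/
def iterRel (r : ℕ → ℕ → Prop) (lam : ℕ) : ℕ → ℕ → ℕ → Prop
  | 0, k, i => k = i ∧ k < lam
  | n+1, k, i => ∃ j, r k j ∧ iterRel r lam n j i

mutual
/-- LDL_f satisfaction over a finite trace `T` of length `lam`. -/
def Sat (T : ℕ → Set α) (lam : ℕ) (φ : Formula α) (k : ℕ) : Prop :=
  match φ with
  | .atom a => a ∈ T k
  | .bot => False
  | .top => True
  | .dia ρ ψ => ∃ i, Rel T lam ρ k i ∧ Sat T lam ψ i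
  | .box ρ ψ => ∀ i, Rel T lam ρ k i → Sat T lam ψ i

/-- Accessibility relation of a path expression over trace `T` of length `lam`. -/
def Rel (T : ℕ → Set α) (lam : ℕ) (ρ : Path α) (k i : ℕ) : Prop :=
  match ρ with
  | .tau => i = k + 1 ∧ k + 1 < lam
  | .test φ => i = k ∧ Sat T lam φ k
  | .plus ρ₁ ρ₂ => Rel T lam ρ₁ k i ∨ Rel T lam ρ₂ k i
  | .seq ρ₁ ρ₂ => ∃ j, Rel T lam ρ₁ k j ∧ Rel T lam ρ₂ j i
  | .star ρ => ∃ n, iterRel (Rel T lam ρ) lam n k i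
end


mutual
/-- DHT satisfaction over HT-traces `⟨H,T⟩` of length `lam`. -/
def SatHT (H T : ℕ → Set α) (lam : ℕ) (φ : Formula α) (k : ℕ) : Prop :=
  match φ with
  | .atom a => a ∈ H k
  | .bot => False
  | .top => True
  | .dia ρ ψ => ∃ i, RelHT H T lam ρ k i ∧ SatHT H T lam ψ i
  | .box ρ ψ =>
      (∀ i, RelHT H T lam ρ k i → SatHT H T lam ψ i) ∧
      (∀ i, RelHT T T lam ρ k i → SatHT T T lam ψ i)

/-- DHT accessibility relation over HT-traces. -/
def RelHT (H T : ℕ → Set α) (lam : ℕ) (ρ : Path α) (k i : ℕ) : Prop :=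
  match ρ with
  | .tau => i = k + 1 ∧ k + 1 < lam
  | .test φ => i = k ∧ SatHT H T lam φ k
  | .plus ρ₁ ρ₂ => RelHT H T lam ρ₁ k i ∨ RelHT H T lam ρ₂ k i
  | .seq ρ₁ ρ₂ => ∃ j, RelHT H T lam ρ₁ k j ∧ RelHT H T lam ρ₂ j i
  | .star ρ => ∃ n, iterRel (RelHT H T lam ρ) lam n k i
end

/-- Negation, defined as `¬φ := [φ?]⊥`. -/
def Formula.neg (φ : Formula α) : Formula α := .box (.test φ) .bot

mutual
theorem satHT_total {α : Type} (T : ℕ → Set α) (lam : ℕ) (φ : Formula α) (k : ℕ) :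
    SatHT T T lam φ k ↔ Sat T lam φ k := by
  match φ with
  | .atom a => rfl
  | .bot => rfl
  | .top => rfl
  | .dia ρ ψ =>
      simp only [SatHT, Sat]
      exact exists_congr fun i => and_congr (relHT_total T lam ρ k i) (satHT_total T lam ψ i)
  | .box ρ ψ =>
      simp only [SatHT, Sat]
      constructor
      · intro h i hi
        exact (satHT_total T lam ψ i).1 (h.1 i ((relHT_total T lam ρ k i).2 hi))
      · intro h
        refine ⟨fun i hi => ?_, fun i hi => ?_⟩ <;>
          exact (satHT_total T lam ψ i).2 (h i ((relHT_total T lam ρ k i).1 hi))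

theorem relHT_total {α : Type} (T : ℕ → Set α) (lam : ℕ) (ρ : Path α) (k i : ℕ) :
    RelHT T T lam ρ k i ↔ Rel T lam ρ k i := by
  match ρ with
  | .tau => rfl
  | .test φ =>
      simp only [RelHT, Rel]
      exact and_congr Iff.rfl (satHT_total T lam φ k)
  | .plus ρ₁ ρ₂ =>
      exact or_congr (relHT_total T lam ρ₁ k i) (relHT_total T lam ρ₂ k i)
  | .seq ρ₁ ρ₂ =>
      exact exists_congr fun j =>
        and_congr (relHT_total T lam ρ₁ k j) (relHT_total T lam ρ₂ j i)
  | .star ρ =>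
      refine exists_congr fun n => ?_
      induction n generalizing k with
      | zero => exact Iff.rfl
      | succ n ih =>
          exact exists_congr fun j => and_congr (relHT_total T lam ρ k j) (ih j)
end

/-- Proposition 3: `⟨H,T⟩,k ⊨ ¬¬φ` in DHT iff `T,k ⊨ φ` in LDL. -/
theorem dht_not_not {α : Type} (H T : ℕ → Set α) (lam : ℕ)
    (hHT : ∀ i, i < lam → H i ⊆ T i) (φ : Formula α) (k : ℕ) (hk : k < lam) :
    SatHT H T lam (φ.neg.neg) k ↔ Sat T lam φ k := by
  simp only [Formula.neg, SatHT, RelHT, satHT_total]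
  constructor
  · intro h
    by_contra hφ
    exact h.2 k ⟨rfl, fun i hi => hφ hi.2, fun i hi => hφ hi.2⟩
  · intro hφ
    exact ⟨fun i hi => hi.2.2 k ⟨rfl, hφ⟩, fun i hi => hi.2.2 k ⟨rfl, hφ⟩⟩

end LDL
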